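/- arXiv:1504.03043 — 4 statements merged into one kernel-verified Lean document; each statement's English description precedes it below -/
import Mathlib

section
/- For every real ν ≥ 0 and all integers n, m with 1 ≤ m ≤ ⌊n/2⌋, one has Γ(ν+n−m) / (Γ(ν+n) · (n−2m)!) ≤ n^m / n!. -/
private lemma gamma_prod (x : ℝ) (hx : 0 < x) (m : ℕ) :
    Real.Gamma (x + m) = Real.Gamma x * ∏ j ∈ Finset.range m, (x + j) := by
  induction m with
  | zero => simp
  | succ m ih =>
    have hxm : x + m ≠ 0 := by positivity
    have : (x : ℝ) + (m + 1 : ℕ) = (x + m) + 1 := by push_cast; ring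
    rw [this, Real.Gamma_add_one hxm, ih, Finset.prod_range_succ]
    ring

private lemma asc_cast (k m : ℕ) :
    ((k.ascFactorial m : ℕ) : ℝ) = ∏ j ∈ Finset.range m, ((k : ℝ) + j) := by
  induction m with
  | zero => simp
  | succ m ih =>
    rw [Nat.ascFactorial_succ, Finset.prod_range_succ, ← ih]
    push_cast; ring

private lemma nat_fact_ineq (n m : ℕ) (hm1 : 1 ≤ m) (h2m : 2 * m ≤ n) :
    n.factorial ≤ n ^ m * (n - m).ascFactorial m * (n - 2 * m).factorial := by
  have hmn : m ≤ n := le_trans (by omega) h2m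
  have h1 : (n - m - 1).factorial * (n - m).ascFactorial m = (n - 1).factorial := by
    have hk : n - m = (n - m - 1) + 1 := by omega
    have := Nat.factorial_mul_ascFactorial (n - m - 1) m
    rw [← hk] at this
    rw [this]; congr 1; omega
  have h2 : (n - 2 * m).factorial * (n - 2 * m + 1).ascFactorial (m - 1)
      = (n - m - 1).factorial := by
    have := Nat.factorial_mul_ascFactorial (n - 2 * m) (m - 1)
    rw [this]; congr 1; omega
  have h3 : (n - 2 * m + 1).ascFactorial (m - 1) ≤ n ^ (m - 1) := by
    calc (n - 2 * m + 1).ascFactorial (m - 1) ≤ (n - 2 * m + (m - 1)) ^ (m - 1) :=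
          Nat.ascFactorial_le_pow_add _ _
      _ ≤ n ^ (m - 1) := Nat.pow_le_pow_left (by omega) _
  have h4 : n.factorial = n * (n - 1).factorial := by
    have : n = (n - 1) + 1 := by omega
    rw [this, Nat.factorial_succ]; congr 1
  calc n.factorial = n * ((n - 2 * m).factorial * (n - 2 * m + 1).ascFactorial (m - 1))
          * (n - m).ascFactorial m := by rw [h2, Nat.mul_assoc, h1, ← h4]
    _ ≤ n * ((n - 2 * m).factorial * n ^ (m - 1)) * (n - m).ascFactorial m := by
        exact Nat.mul_le_mul_right _ (Nat.mul_le_mul_left _ (Nat.mul_le_mul_left _ h3))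
    _ = n ^ m * (n - m).ascFactorial m * (n - 2 * m).factorial := by
        have hpow : n ^ m = n ^ (m - 1) * n := by
          rw [← pow_succ]; congr 1; omega
        rw [hpow]; ring

/-- For every real `ν ≥ 0` and all integers `n`, `m` with `1 ≤ m ≤ ⌊n/2⌋`, one has
`Γ(ν+n−m) / (Γ(ν+n) (n−2m)!) ≤ n^m / n!`. -/
theorem gamma_ratio_le (ν : ℝ) (hν : 0 ≤ ν) (n m : ℕ) (hm1 : 1 ≤ m) (hm2 : m ≤ n / 2) :
    Real.Gamma (ν + n - m) / (Real.Gamma (ν + n) * ((n - 2 * m).factorial : ℝ)) ≤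
      (n : ℝ) ^ m / (n.factorial : ℝ) := by
  have h2m : 2 * m ≤ n := by omega
  have hmn : m ≤ n := by omega
  set k := n - m with hk
  have hcast : (ν : ℝ) + n - m = ν + k := by
    have : ((k : ℕ) : ℝ) = (n : ℝ) - m := by
      rw [hk]; push_cast [hmn]; ring
    rw [this]; ring
  have hx : (0 : ℝ) < ν + k := by
    have : (1 : ℕ) ≤ k := by omega
    have : (1 : ℝ) ≤ (k : ℝ) := by exact_mod_cast this
    linarith
  have hnk : (ν : ℝ) + n = (ν + k) + m := by
    have : ((k : ℕ) : ℝ) = (n : ℝ) - m := by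
      rw [hk]; push_cast [hmn]; ring
    rw [this]; ring
  rw [hcast, hnk, gamma_prod _ hx m]
  set P := ∏ j ∈ Finset.range m, (ν + k + j) with hP
  have hGpos : 0 < Real.Gamma (ν + k) := Real.Gamma_pos_of_pos hx
  have hQle : ((k.ascFactorial m : ℕ) : ℝ) ≤ P := by
    rw [asc_cast, hP]
    apply Finset.prod_le_prod
    · intro j _; positivity
    · intro j _; linarith [hν]
  have hQpos : 0 < ((k.ascFactorial m : ℕ) : ℝ) := by
    have : 0 < k.ascFactorial m := by
      have hk1 : k = (k - 1) + 1 := by omega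
      rw [hk1]; exact Nat.ascFactorial_pos _ _
    exact_mod_cast this
  have hPpos : 0 < P := lt_of_lt_of_le hQpos hQle
  have hfpos : (0 : ℝ) < ((n - 2 * m).factorial : ℝ) := by
    exact_mod_cast Nat.factorial_pos _
  have hnfpos : (0 : ℝ) < (n.factorial : ℝ) := by exact_mod_cast Nat.factorial_pos n
  rw [div_le_div_iff₀ (by positivity) hnfpos]
  have key : (n.factorial : ℝ) ≤ (n : ℝ) ^ m * ((k.ascFactorial m : ℕ) : ℝ)
      * ((n - 2 * m).factorial : ℝ) := by
    exact_mod_cast nat_fact_ineq n m hm1 h2m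
  calc Real.Gamma (ν + k) * (n.factorial : ℝ)
      ≤ Real.Gamma (ν + k) * ((n : ℝ) ^ m * ((k.ascFactorial m : ℕ) : ℝ)
          * ((n - 2 * m).factorial : ℝ)) := by
        exact mul_le_mul_of_nonneg_left key hGpos.le
    _ ≤ Real.Gamma (ν + k) * ((n : ℝ) ^ m * P * ((n - 2 * m).factorial : ℝ)) := by
        apply mul_le_mul_of_nonneg_left _ hGpos.le
        apply mul_le_mul_of_nonneg_right _ hfpos.le
        exact mul_le_mul_of_nonneg_left hQle (by positivity)
    _ = (n : ℝ) ^ m * (Real.Gamma (ν + k) * P * ((n - 2 * m).factorial : ℝ)) := by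
        ring
end

section
/- For every real α with |α| ≤ 1 and every real ξ > 0, the series ∑_{n=1}^∞ n C_n^0(α) I_n(ξ) converges absolutely and e^{α ξ} = I_0(ξ) + ∑_{n=1}^∞ n C_n^0(α) I_n(ξ). -/
/-- For real `μ ≥ 0` and `ξ > 0`, the modified Bessel function of the first kind,
defined by the series `I_μ(ξ) = ∑_{m=0}^∞ (ξ/2)^(μ+2m) / (Γ(m+1) Γ(m+μ+1))`. -/
noncomputable def besselI (μ : ℝ) (ξ : ℝ) : ℝ :=
  ∑' m : ℕ, (ξ / 2) ^ (μ + 2 * (m : ℝ)) /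
    (Real.Gamma ((m : ℝ) + 1) * Real.Gamma ((m : ℝ) + μ + 1))

/-- The degenerate Gegenbauer polynomial: `C_0^0(x) = 1` and, for `n ≥ 1`,
`C_n^0(x) = ∑_{m=0}^{⌊n/2⌋} (−1)^m Γ(n−m) (2x)^(n−2m) / (Γ(m+1) Γ(n−2m+1))`. -/
noncomputable def gegenbauerC0 (n : ℕ) (x : ℝ) : ℝ :=
  if n = 0 then 1 else
    ∑ m ∈ Finset.range (n / 2 + 1),
      (-1 : ℝ) ^ m * Real.Gamma ((n : ℝ) - m) * (2 * x) ^ (n - 2 * m) /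
        (Real.Gamma ((m : ℝ) + 1) * Real.Gamma ((n : ℝ) - 2 * m + 1))

/-!
Put `2α = z + z⁻¹`. Then `n C_n^0(α) = C_n(2α) = zⁿ + z⁻ⁿ` for `n ≥ 1`, where `C_n` is the
Vieta–Lucas polynomial: the coefficients of `C_n = 2 S_n - X S_{n-1}` come from those of the
Vieta–Fibonacci polynomial `S_n`, which are `(-1)^m binom(n-m, m)` by Pascal's rule.
On the other hand, multiplying the exponential series of `e^{ξz/2}` and `e^{ξ/(2z)}` and
collecting equal powers of `z` gives the generating function
`e^{(ξ/2)(z + z⁻¹)} = ∑_{n ∈ ℤ} I_{|n|}(ξ) zⁿ`. Taking for `z` a complex root of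
`z² - 2αz + 1` and pairing `n` with `-n` gives the identity; its series is real, hence
absolutely convergent.
-/

open Polynomial Finset
open scoped Nat

namespace Polynomial.Chebyshev

variable {R : Type*} [CommRing R]

theorem S_eval_eq_sum_choose (n : ℕ) (y : R) :
    (S R n).eval y =
      ∑ m ∈ range (n + 1), (-1) ^ m * ((n - m).choose m : R) * y ^ (n - 2 * m) := by
  obtain ⟨t, ht⟩ : ∃ t : ℕ → ℕ → R,
      ∀ n m, t n m = (-1) ^ m * ((n - m).choose m : R) * y ^ (n - 2 * m) := ⟨_, fun _ _ => rfl⟩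
  simp only [← ht]
  induction n using Nat.twoStepInduction with
  | zero => simp [ht]
  | one => simp [sum_range_succ, ht]
  | more n ih₀ ih₁ =>
    have pascal (m : ℕ) :
        (n + 1 - m).choose (m + 1) = (n - m).choose m + (n - m).choose (m + 1) := by
      rcases le_or_gt m n with h | h
      · rw [Nat.sub_add_comm h, Nat.choose_succ_succ']
      · simp [Nat.sub_eq_zero_of_le h, Nat.sub_eq_zero_of_le h.le, Nat.choose_eq_zero_of_lt h.pos]
    have shift (m : ℕ) : ((n - m).choose (m + 1) : R) * y ^ (n - 2 * m) =
        (n - m).choose (m + 1) * (y * y ^ (n + 1 - 2 * (m + 1))) := by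
      rcases le_or_gt (2 * m + 1) n with h | h
      · rw [← pow_succ']; congr 2; omega
      · rw [Nat.choose_eq_zero_of_lt (by omega)]; simp
    have step (m : ℕ) : t (n + 2) (m + 1) = y * t (n + 1) (m + 1) - t n m := by
      rw [ht, ht, ht, show n + 2 - (m + 1) = n + 1 - m by omega, pascal,
        show n + 2 - 2 * (m + 1) = n - 2 * m by omega, Nat.add_sub_add_right, pow_succ]
      push_cast
      linear_combination (-1 : R) ^ (m + 1) * shift m
    have top₁ : t (n + 1) (n + 2) = 0 := by simp [ht]
    have top₀ : t n (n + 1) = 0 := by simp [ht]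
    have bottom (k : ℕ) : t k 0 = y ^ k := by simp [ht]
    push_cast at ih₁ ⊢
    rw [S_add_two, eval_sub, eval_mul, eval_X, ih₀, ih₁, sum_range_succ' _ (n + 2),
      sum_range_succ' _ (n + 1), sum_congr rfl fun m _ => step m, sum_sub_distrib, ← mul_sum,
      sum_range_succ (fun m => t (n + 1) (m + 1)) (n + 1), sum_range_succ (t n) (n + 1), top₁,
      top₀, bottom, bottom]
    ring

theorem C_eval_eq_sum_choose (n : ℕ) (y : R) :
    (C R ((n + 1 : ℕ) : ℤ)).eval y = ∑ m ∈ range (n + 2),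
      (-1) ^ m * (2 * ((n + 1 - m).choose m : R) - (n - m).choose m) * y ^ (n + 1 - 2 * m) := by
  have hS := S_eval_eq_sum_choose (n + 1) y
  have shift (m : ℕ) : y * ((-1) ^ m * ((n - m).choose m : R) * y ^ (n - 2 * m)) =
      (-1) ^ m * (n - m).choose m * y ^ (n + 1 - 2 * m) := by
    rcases le_or_gt (2 * m) n with h | h
    · rw [show n + 1 - 2 * m = n - 2 * m + 1 by omega, pow_succ]; ring
    · rw [Nat.choose_eq_zero_of_lt (by omega)]; simp
  push_cast at hS ⊢
  rw [C_eq_S_sub_X_mul_S, add_sub_cancel_right, eval_sub, eval_mul, eval_mul, eval_X, eval_ofNat,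
    hS, S_eval_eq_sum_choose, mul_sum, mul_sum]
  have top : ∑ m ∈ range (n + 1), y * ((-1) ^ m * ((n - m).choose m : R) * y ^ (n - 2 * m)) =
      ∑ m ∈ range (n + 2), y * ((-1) ^ m * ((n - m).choose m : R) * y ^ (n - 2 * m)) := by
    simp [sum_range_succ _ (n + 1)]
  rw [top, ← sum_sub_distrib]
  refine sum_congr rfl fun m _ => ?_
  rw [shift]
  ring

end Polynomial.Chebyshev

theorem natCast_mul_Gamma_div_eq_choose {n m : ℕ} (h : 2 * m ≤ n + 1) :
    ((n + 1 : ℕ) : ℝ) * Real.Gamma ((n + 1 : ℕ) - m) /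
        (Real.Gamma (m + 1) * Real.Gamma ((n + 1 : ℕ) - 2 * m + 1)) =
      2 * ((n + 1 - m).choose m : ℝ) - (n - m).choose m := by
  obtain ⟨k, hk⟩ := Nat.exists_eq_add_of_le h
  rcases k with _ | j
  · obtain ⟨j, rfl⟩ : ∃ j, m = j + 1 := ⟨m - 1, by omega⟩
    obtain rfl : n = 2 * j + 1 := by omega
    rw [show ((2 * j + 1 + 1 : ℕ) : ℝ) - (j + 1 : ℕ) = j + 1 by push_cast; ring,
      show ((2 * j + 1 + 1 : ℕ) : ℝ) - 2 * (j + 1 : ℕ) + 1 = (0 : ℕ) + 1 by push_cast; ring,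
      Real.Gamma_nat_eq_factorial, Real.Gamma_nat_eq_factorial, Real.Gamma_nat_eq_factorial,
      show 2 * j + 1 + 1 - (j + 1) = j + 1 by omega, show 2 * j + 1 - (j + 1) = j by omega,
      Nat.choose_self, Nat.choose_succ_self, Nat.factorial_succ]
    push_cast
    field_simp
    ring
  · obtain rfl : n = 2 * m + j := by omega
    rw [show ((2 * m + j + 1 : ℕ) : ℝ) - m = (m + j : ℕ) + 1 by push_cast; ring,
      show ((2 * m + j + 1 : ℕ) : ℝ) - 2 * m + 1 = (j + 1 : ℕ) + 1 by push_cast; ring,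
      Real.Gamma_nat_eq_factorial, Real.Gamma_nat_eq_factorial, Real.Gamma_nat_eq_factorial,
      show 2 * m + j + 1 - m = m + (j + 1) by omega, show 2 * m + j - m = m + j by omega,
      Nat.cast_add_choose, Nat.cast_add_choose, ← add_assoc, Nat.factorial_succ (m + j),
      Nat.factorial_succ j]
    push_cast
    field_simp
    ring

open Polynomial.Chebyshev in
theorem natCast_mul_gegenbauerC0_eq_eval_C (n : ℕ) (x : ℝ) :
    ((n + 1 : ℕ) : ℝ) * gegenbauerC0 (n + 1) x = (C ℝ ((n + 1 : ℕ) : ℤ)).eval (2 * x) := by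
  rw [C_eval_eq_sum_choose, gegenbauerC0, if_neg n.succ_ne_zero, mul_sum,
    ← sum_subset (range_subset_range.2 (by omega : (n + 1) / 2 + 1 ≤ n + 2))]
  · refine sum_congr rfl fun m hm => ?_
    rw [← natCast_mul_Gamma_div_eq_choose (by rw [mem_range] at hm; omega)]
    ring
  · intro m _ hm
    rw [mem_range, not_lt] at hm
    rw [Nat.choose_eq_zero_of_lt (by omega), Nat.choose_eq_zero_of_lt (by omega)]
    simp

open Polynomial.Chebyshev in
theorem natCast_mul_gegenbauerC0_eq_pow_add_pow (n : ℕ) {x : ℝ} {z w : ℂ} (hzw : z * w = 1)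
    (hx : z + w = 2 * x) :
    (((n + 1 : ℕ) * gegenbauerC0 (n + 1) x : ℝ) : ℂ) = z ^ (n + 1) + w ^ (n + 1) := by
  rw [natCast_mul_gegenbauerC0_eq_eval_C, ← Complex.coe_algebraMap, algebraMap_eval_C,
    Complex.coe_algebraMap, Complex.ofReal_mul, Complex.ofReal_ofNat, ← hx,
    ← dickson_one_one_eq_chebyshev_C, dickson_one_one_eval_add_inv z w hzw]

theorem besselI_natCast (n : ℕ) (ξ : ℝ) :
    besselI n ξ = ∑' m : ℕ, (ξ / 2) ^ (n + 2 * m) / (m ! * (m + n)! : ℝ) := by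
  refine tsum_congr fun m => ?_
  rw [← Real.Gamma_nat_eq_factorial, ← Real.Gamma_nat_eq_factorial, ← Real.rpow_natCast]
  push_cast
  ring_nf

def intProdNatEquiv : ℤ × ℕ ≃ ℕ × ℕ where
  toFun s := (s.2 + s.1.toNat, s.2 + (-s.1).toNat)
  invFun p := ((p.1 : ℤ) - p.2, min p.1 p.2)
  left_inv := by rintro ⟨n, q⟩; ext <;> simp; omega
  right_inv := by rintro ⟨p, q⟩; ext <;> simp <;> omega

theorem pow_div_factorial_mul_inv_pow_div_factorial (c : ℂ) {z : ℂ} (hz : z ≠ 0) (n : ℤ) (q : ℕ) :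
    (c * z) ^ (q + n.toNat) / (q + n.toNat)! *
        ((c * z⁻¹) ^ (q + (-n).toNat) / (q + (-n).toNat)!) =
      c ^ (n.natAbs + 2 * q) / (q ! * (q + n.natAbs)! : ℂ) * z ^ n := by
  rcases Int.eq_nat_or_neg n with ⟨k, rfl | rfl⟩
  · simp only [Int.toNat_natCast, Int.toNat_neg_natCast, Int.natAbs_natCast, zpow_natCast,
      add_zero, mul_pow, inv_pow, pow_add]
    field_simp
    ring
  · simp only [Int.toNat_natCast, Int.toNat_neg_natCast, Int.natAbs_neg, Int.natAbs_natCast,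
      neg_neg, zpow_neg, zpow_natCast, add_zero, mul_pow, inv_pow, pow_add]
    field_simp
    ring

theorem hasSum_pow_div_factorial_mul_pow_div_factorial (a b : ℂ) :
    HasSum (fun p : ℕ × ℕ => a ^ p.1 / (p.1 ! : ℂ) * (b ^ p.2 / (p.2 ! : ℂ)))
      (Complex.exp (a + b)) := by
  have hexp (a : ℂ) : HasSum (fun p : ℕ => a ^ p / (p ! : ℂ)) (Complex.exp a) := by
    rw [Complex.exp_eq_exp_ℂ]
    exact NormedSpace.expSeries_div_hasSum_exp a
  have hnorm (a : ℂ) : Summable fun p : ℕ => ‖a ^ p / (p ! : ℂ)‖ := by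
    simpa [norm_div, norm_pow] using Real.summable_pow_div_factorial ‖a‖
  rw [Complex.exp_add]
  have hsum := summable_mul_of_summable_norm (R := ℂ) (f := fun p : ℕ => a ^ p / (p ! : ℂ))
    (g := fun p : ℕ => b ^ p / (p ! : ℂ)) (hnorm a) (hnorm b)
  exact HasSum.mul (f := fun p : ℕ => a ^ p / (p ! : ℂ)) (g := fun p : ℕ => b ^ p / (p ! : ℂ))
    (hexp a) (hexp b) hsum

theorem hasSum_besselI_mul_zpow (ξ : ℝ) {z : ℂ} (hz : z ≠ 0) :
    HasSum (fun n : ℤ => (besselI n.natAbs ξ : ℂ) * z ^ n) (Complex.exp (ξ / 2 * (z + z⁻¹))) := by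
  have h := hasSum_pow_div_factorial_mul_pow_div_factorial (ξ / 2 * z) (ξ / 2 * z⁻¹)
  rw [← mul_add, ← intProdNatEquiv.hasSum_iff] at h
  refine h.prod_fiberwise fun n => ?_
  have hfib := (h.summable.prod_factor n).hasSum
  simp only [Function.comp_apply, intProdNatEquiv, Equiv.coe_fn_mk,
    pow_div_factorial_mul_inv_pow_div_factorial _ hz, tsum_mul_right] at hfib ⊢
  rw [besselI_natCast, Complex.ofReal_tsum]
  push_cast
  exact hfib

theorem hasSum_pow_add_inv_pow_mul_besselI (ξ : ℝ) {z : ℂ} (hz : z ≠ 0) :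
    HasSum (fun n : ℕ => (z ^ (n + 1) + z⁻¹ ^ (n + 1)) * besselI (n + 1 : ℕ) ξ)
      (Complex.exp (ξ / 2 * (z + z⁻¹)) - besselI 0 ξ) := by
  have h := (hasSum_besselI_mul_zpow ξ hz).nat_add_neg
  rw [← hasSum_nat_add_iff' 1] at h
  simp only [Int.natAbs_neg, Int.natAbs_natCast, zpow_neg, zpow_natCast, ← inv_pow,
    mul_comm _ (_ ^ _), ← add_mul, sum_range_one, Nat.cast_zero, Int.natAbs_zero, zpow_zero,
    mul_one, pow_zero] at h
  rwa [show ∀ a b : ℂ, a + b - (1 + 1) * b = a - b by intro a b; ring] at h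

theorem exp_eq_besselI_series_general (α : ℝ) (ξ : ℝ) :
    Summable (fun n : ℕ => |((n + 1 : ℕ) : ℝ) * gegenbauerC0 (n + 1) α *
      besselI ((n + 1 : ℕ) : ℝ) ξ|) ∧
    Real.exp (α * ξ) = besselI 0 ξ +
      ∑' n : ℕ, ((n + 1 : ℕ) : ℝ) * gegenbauerC0 (n + 1) α * besselI ((n + 1 : ℕ) : ℝ) ξ := by
  obtain ⟨s, hs⟩ := IsAlgClosed.exists_eq_mul_self ((α : ℂ) ^ 2 - 1)
  have hzw : (α + s : ℂ) * (α - s) = 1 := by linear_combination hs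
  have hsum : (α + s : ℂ) + (α - s) = 2 * α := by ring
  have h := hasSum_pow_add_inv_pow_mul_besselI ξ (left_ne_zero_of_mul_eq_one hzw)
  rw [inv_eq_of_mul_eq_one_right hzw, hsum] at h
  simp only [← natCast_mul_gegenbauerC0_eq_pow_add_pow _ hzw hsum] at h
  rw [show (ξ : ℂ) / 2 * (2 * α) = (α * ξ : ℝ) by push_cast; ring, ← Complex.ofReal_exp] at h
  simp only [← Complex.ofReal_mul, ← Complex.ofReal_sub, Complex.hasSum_ofReal] at h
  exact ⟨summable_abs_iff.mpr h.summable, by rw [h.tsum_eq]; ring⟩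

/-- For every real `α` with `|α| ≤ 1` and every real `ξ > 0`, the series
`∑_{n=1}^∞ n C_n^0(α) I_n(ξ)` converges absolutely and
`e^(αξ) = I_0(ξ) + ∑_{n=1}^∞ n C_n^0(α) I_n(ξ)`. -/
theorem exp_eq_besselI_series (α : ℝ) (hα : |α| ≤ 1) (ξ : ℝ) (hξ : 0 < ξ) :
    Summable (fun n : ℕ => |((n + 1 : ℕ) : ℝ) * gegenbauerC0 (n + 1) α *
      besselI ((n + 1 : ℕ) : ℝ) ξ|) ∧
    Real.exp (α * ξ) = besselI 0 ξ +
      ∑' n : ℕ, ((n + 1 : ℕ) : ℝ) * gegenbauerC0 (n + 1) α * besselI ((n + 1 : ℕ) : ℝ) ξ :=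
  exp_eq_besselI_series_general α ξ
end

section
/- Let a > 0, ν > 0 and L be real numbers, and let f : (0,∞) → ℝ be a continuous nonnegative function such that t^{ν+1} f(t) → L as t → ∞. Then t^{ν+1} e^{a t} ∫_t^∞ e^{−a s} f(s) ds → L/a as t → ∞. -/
open MeasureTheory Filter Set Real Topology Asymptotics

/-!
With `G t = ∫ s in Ioi t, exp (-a * s) * f s` and `h t = t ^ (-(ν + 1)) * exp (-a * t)`, both
tend to `0`, and `G' / h' = t ^ (ν + 1) * f t / ((ν + 1) / t + a) → L / a`, so L'Hôpital's rule
gives `G / h → L / a`. The tail integral exists because `f = O(t ^ (-(ν + 1)))` is dominated by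
half of the exponential decay.
-/

section TailIntegral

variable {F : ℝ → ℝ} {c : ℝ}

theorem hasDerivAt_integral_Ioi (hFi : IntegrableOn F (Ioi c)) (hFc : ContinuousOn F (Ioi c))
    {t : ℝ} (hct : c < t) : HasDerivAt (fun u => ∫ s in Ioi u, F s) (-F t) t := by
  have hprimitive : HasDerivAt (fun u => ∫ s in c..u, F s) (F t) t :=
    intervalIntegral.integral_hasDerivAt_right
      ((intervalIntegrable_iff_integrableOn_Ioc_of_le hct.le).2
        (hFi.mono_set Ioc_subset_Ioi_self))
      ⟨Ioi c, Ioi_mem_nhds hct, hFc.aestronglyMeasurable measurableSet_Ioi⟩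
      (hFc.continuousAt (Ioi_mem_nhds hct))
  refine (hprimitive.const_sub (∫ s in Ioi c, F s)).congr_of_eventuallyEq ?_
  filter_upwards [Ioi_mem_nhds hct] with u hu
  rw [← intervalIntegral.integral_interval_add_Ioi hFi (hFi.mono_set (Ioi_subset_Ioi hu.le))]
  ring

theorem tendsto_integral_Ioi_div_of_tendsto_div_deriv (hFi : IntegrableOn F (Ioi c))
    (hFc : ContinuousOn F (Ioi c)) {h h' : ℝ → ℝ} {l : ℝ}
    (hh : ∀ᶠ t in atTop, HasDerivAt h (h' t) t) (hh' : ∀ᶠ t in atTop, h' t ≠ 0)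
    (htop : Tendsto h atTop (𝓝 0)) (hdiv : Tendsto (fun t => -F t / h' t) atTop (𝓝 l)) :
    Tendsto (fun t => (∫ s in Ioi t, F s) / h t) atTop (𝓝 l) :=
  HasDerivAt.lhopital_zero_atTop
    (eventually_gt_atTop c |>.mono fun _ => hasDerivAt_integral_Ioi hFi hFc) hh hh'
    (tendsto_integral_Ioi_zero tendsto_id) htop hdiv

end TailIntegral

theorem Filter.Tendsto.isBigO_rpow_neg {f : ℝ → ℝ} {p L : ℝ}
    (hf : Tendsto (fun t => t ^ p * f t) atTop (𝓝 L)) : f =O[atTop] fun t => t ^ (-p) := by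
  refine (hf.isBigO_one ℝ |>.mul (isBigO_refl (fun t : ℝ => t ^ (-p)) atTop)).congr' ?_ ?_
  · filter_upwards [eventually_gt_atTop 0] with t ht
    rw [mul_comm, ← mul_assoc, ← rpow_add ht, neg_add_cancel, rpow_zero, one_mul]
  · simp only [one_mul, EventuallyEq.rfl]

theorem integrableOn_Ioi_exp_neg_mul_mul {f : ℝ → ℝ} {a c q : ℝ} (ha : 0 < a)
    (hf : ContinuousOn f (Ici c)) (ho : f =O[atTop] fun t => t ^ q) :
    IntegrableOn (fun s => exp (-a * s) * f s) (Ioi c) := by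
  refine integrable_of_isBigO_exp_neg (half_pos ha)
    ((continuous_exp.comp (continuous_const.mul continuous_id)).continuousOn.mul hf) ?_
  have := (isBigO_refl (fun t : ℝ => exp (-a * t)) atTop).mul
    (ho.trans (isLittleO_rpow_exp_pos_mul_atTop q (half_pos ha)).isBigO)
  refine this.congr_right fun t => ?_
  rw [← exp_add]
  ring_nf

theorem hasDerivAt_rpow_neg_mul_exp_neg_mul (p a : ℝ) {t : ℝ} (ht : 0 < t) :
    HasDerivAt (fun t => t ^ (-p) * exp (-a * t))
      (-(t ^ (-p) * exp (-a * t)) * (p / t + a)) t := by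
  have hexp : HasDerivAt (fun t => exp (-a * t)) (exp (-a * t) * -a) t := by
    simpa using ((hasDerivAt_id t).const_mul (-a)).exp
  refine ((hasDerivAt_rpow_const (p := -p) (Or.inl ht.ne')).mul hexp).congr_deriv ?_
  rw [rpow_sub ht, rpow_one]
  field_simp
  ring

theorem tail_integral_asymptotics_polynomial_general (a ν L : ℝ) (ha : 0 < a)
    (f : ℝ → ℝ) (hf : ContinuousOn f (Set.Ioi 0))
    (hlim : Filter.Tendsto (fun t : ℝ => t ^ (ν + 1) * f t) Filter.atTop (nhds L)) :
    Filter.Tendsto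
      (fun t : ℝ => t ^ (ν + 1) * Real.exp (a * t) * ∫ s in Set.Ioi t, Real.exp (-a * s) * f s)
      Filter.atTop (nhds (L / a)) := by
  have hf1 : ContinuousOn f (Ici 1) := hf.mono fun _ hs => mem_Ioi.2 (one_pos.trans_le hs)
  have hFi : IntegrableOn (fun s => exp (-a * s) * f s) (Ioi 1) :=
    integrableOn_Ioi_exp_neg_mul_mul ha hf1 hlim.isBigO_rpow_neg
  have hFc : ContinuousOn (fun s => exp (-a * s) * f s) (Ioi 1) :=
    (continuous_exp.comp (continuous_const.mul continuous_id)).continuousOn.mul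
      (hf1.mono Ioi_subset_Ici_self)
  have hden : Tendsto (fun t => (ν + 1) / t + a) atTop (𝓝 a) := by
    simpa using (tendsto_const_nhds.div_atTop tendsto_id).add_const a
  have hdiv : Tendsto (fun t => -(exp (-a * t) * f t) /
      (-(t ^ (-(ν + 1)) * exp (-a * t)) * ((ν + 1) / t + a))) atTop (𝓝 (L / a)) := by
    refine (hlim.div hden ha.ne').congr' ?_
    filter_upwards [eventually_gt_atTop 0, hden.eventually_ne ha.ne'] with t ht hne
    rw [Pi.div_apply, rpow_neg ht.le]
    field_simp
  have hderiv_ne : ∀ᶠ t in atTop, -(t ^ (-(ν + 1)) * exp (-a * t)) * ((ν + 1) / t + a) ≠ 0 := by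
    filter_upwards [eventually_gt_atTop 0, hden.eventually_ne ha.ne'] with t ht hne
    exact mul_ne_zero (neg_ne_zero.2 (by positivity)) hne
  refine (tendsto_integral_Ioi_div_of_tendsto_div_deriv hFi hFc
    (eventually_gt_atTop 0 |>.mono fun _ => hasDerivAt_rpow_neg_mul_exp_neg_mul (ν + 1) a)
    hderiv_ne (tendsto_rpow_mul_exp_neg_mul_atTop_nhds_zero _ a ha) hdiv).congr' ?_
  filter_upwards [eventually_gt_atTop 0] with t ht
  rw [rpow_neg ht.le, neg_mul, exp_neg]
  field_simp

/-- Let `a > 0`, `ν > 0` and `L` be real numbers, and let `f : (0,∞) → ℝ` be a continuous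
nonnegative function such that `t^(ν+1) f(t) → L` as `t → ∞`.  Then
`t^(ν+1) e^(at) ∫_t^∞ e^(−as) f(s) ds → L/a` as `t → ∞`. -/
theorem tail_integral_asymptotics_polynomial (a ν L : ℝ) (ha : 0 < a) (hν : 0 < ν)
    (f : ℝ → ℝ) (hf : ContinuousOn f (Set.Ioi 0)) (hf0 : ∀ t ∈ Set.Ioi (0 : ℝ), 0 ≤ f t)
    (hlim : Filter.Tendsto (fun t : ℝ => t ^ (ν + 1) * f t) Filter.atTop (nhds L)) :
    Filter.Tendsto
      (fun t : ℝ => t ^ (ν + 1) * Real.exp (a * t) * ∫ s in Set.Ioi t, Real.exp (-a * s) * f s)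
      Filter.atTop (nhds (L / a)) :=
  tail_integral_asymptotics_polynomial_general a ν L ha f hf hlim
end

section
/- Let a > 0 and L be real numbers, and let f : (0,∞) → ℝ be a continuous nonnegative function such that t (log t)² f(t) → L as t → ∞. Then t (log t)² e^{a t} ∫_t^∞ e^{−a s} f(s) ds → L/a as t → ∞. -/
/-!
Substituting `s = t + u` gives `φ t e^{at} ∫_t^∞ e^{-as} f s ds = ∫_0^∞ e^{-au} φ t f (t + u) du`
with `φ t = t (log t)²`. Since `φ (t + u) ~ φ t` and `φ (t + u) f (t + u) → L`, the integrand
tends to `L e^{-au}`; because `φ` is monotone and `f ≥ 0`, it is dominated by `(L + 1) e^{-au}`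
for large `t`, and dominated convergence gives the limit `L ∫_0^∞ e^{-au} du = L / a`.
-/

open MeasureTheory Set Filter Real Topology Asymptotics

theorem setIntegral_Ioi_eq_setIntegral_Ioi_zero_add {E : Type*} [NormedAddCommGroup E]
    [NormedSpace ℝ E] (g : ℝ → E) (t : ℝ) :
    ∫ s in Ioi t, g s = ∫ u in Ioi 0, g (u + t) := by
  have := (measurePreserving_add_right volume t).setIntegral_preimage_emb
    (measurableEmbedding_addRight t) g (Ioi t)
  rwa [preimage_add_const_Ioi, sub_self, eq_comm] at this

theorem exp_mul_setIntegral_Ioi_exp_neg_mul (a t : ℝ) (f : ℝ → ℝ) :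
    exp (a * t) * ∫ s in Ioi t, exp (-a * s) * f s = ∫ u in Ioi 0, exp (-a * u) * f (u + t) := by
  rw [setIntegral_Ioi_eq_setIntegral_Ioi_zero_add, ← integral_const_mul]
  congr 1 with u
  rw [← mul_assoc, ← exp_add]
  ring_nf

theorem setIntegral_Ioi_zero_exp_neg_mul {a : ℝ} (ha : 0 < a) :
    ∫ u in Ioi 0, exp (-a * u) = 1 / a := by
  rw [integral_exp_mul_Ioi (neg_lt_zero.2 ha), mul_zero, exp_zero, neg_div_neg_eq]

theorem isEquivalent_add_const_mul_log_sq (c : ℝ) :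
    (fun t => (c + t) * log (c + t) ^ 2) ~[atTop] fun t => t * log t ^ 2 := by
  have h : (fun t : ℝ => c + t) ~[atTop] id :=
    (IsEquivalent.refl.add_isLittleO (isLittleO_const_id_atTop c)).congr_left
      (Eventually.of_forall fun t => add_comm _ _)
  exact h.mul ((h.log tendsto_id).pow 2)

theorem monotoneOn_mul_log_sq : MonotoneOn (fun t : ℝ => t * log t ^ 2) (Ici 1) := by
  intro s hs u _ hsu
  have hs0 : 0 < s := zero_lt_one.trans_le hs
  have hu0 : 0 < u := hs0.trans_le hsu
  have hlog : 0 ≤ log s := log_nonneg hs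
  dsimp only
  gcongr

theorem tendsto_mul_exp_mul_setIntegral_Ioi {a L T : ℝ} (ha : 0 < a) {φ f : ℝ → ℝ}
    (hφ : ∀ c, (fun t => φ (c + t)) ~[atTop] φ) (hφ0 : 0 ≤ φ T) (hφmono : MonotoneOn φ (Ici T))
    (hf : AEStronglyMeasurable f (volume.restrict (Ioi T))) (hf0 : ∀ s, T ≤ s → 0 ≤ f s)
    (hlim : Tendsto (fun t => φ t * f t) atTop (𝓝 L)) :
    Tendsto (fun t => φ t * exp (a * t) * ∫ s in Ioi t, exp (-a * s) * f s)
      atTop (𝓝 (L / a)) := by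
  obtain ⟨T₁, hT₁⟩ := eventually_atTop.1 (hlim.eventually (eventually_le_nhds (lt_add_one L)))
  have hshift (t : ℝ) : φ t * exp (a * t) * ∫ s in Ioi t, exp (-a * s) * f s =
      ∫ u in Ioi 0, exp (-a * u) * (φ t * f (u + t)) := by
    rw [mul_assoc, exp_mul_setIntegral_Ioi_exp_neg_mul, ← integral_const_mul]
    congr 1 with u
    ring
  have hlimit : ∫ u in Ioi 0, exp (-a * u) * L = L / a := by
    rw [integral_mul_const, setIntegral_Ioi_zero_exp_neg_mul ha, one_div_mul_eq_div]
  simp only [hshift, ← hlimit]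
  refine tendsto_integral_filter_of_dominated_convergence (fun u => exp (-a * u) * (L + 1))
    ?meas ?bound ((exp_neg_integrableOn_Ioi 0 ha).mul_const _) ?pointwise
  case meas =>
    filter_upwards [eventually_ge_atTop T] with t ht
    have htranslate :
        MeasurePreserving (· + t) (volume.restrict (Ioi 0)) (volume.restrict (Ioi t)) := by
      simpa [preimage_add_const_Ioi] using
        (measurePreserving_add_right volume t).restrict_preimage_emb
          (measurableEmbedding_addRight t) (Ioi t)
    have hft := hf.mono_measure (Measure.restrict_mono (Ioi_subset_Ioi ht) le_rfl)
    exact (continuous_exp.comp (continuous_const.mul continuous_id)).aestronglyMeasurable.mul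
      ((hft.comp_measurePreserving htranslate).const_mul _)
  case bound =>
    filter_upwards [eventually_ge_atTop (max T T₁)] with t ht
    rw [max_le_iff] at ht
    refine (ae_restrict_iff' measurableSet_Ioi).2 (Eventually.of_forall fun u (hu : 0 < u) => ?_)
    have htu : t ≤ u + t := le_add_of_nonneg_left hu.le
    have hφt : 0 ≤ φ t := hφ0.trans (hφmono self_mem_Ici ht.1 ht.1)
    have hfu : 0 ≤ f (u + t) := hf0 _ (ht.1.trans htu)
    have hφfu : φ t * f (u + t) ≤ L + 1 :=
      calc φ t * f (u + t) ≤ φ (u + t) * f (u + t) := by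
            gcongr; exact hφmono ht.1 (ht.1.trans htu) htu
        _ ≤ L + 1 := hT₁ _ (ht.2.trans htu)
    rw [norm_of_nonneg (by positivity)]
    gcongr
  case pointwise =>
    refine Eventually.of_forall fun u => (Tendsto.const_mul _ ?_)
    exact ((hφ u).mul IsEquivalent.refl).tendsto_nhds
      (hlim.comp (tendsto_atTop_add_const_left atTop u tendsto_id))

/-- Let `a > 0` and `L` be real numbers, and let `f : (0,∞) → ℝ` be a continuous
nonnegative function such that `t (log t)² f(t) → L` as `t → ∞`.  Then
`t (log t)² e^(at) ∫_t^∞ e^(−as) f(s) ds → L/a` as `t → ∞`. -/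
theorem tail_integral_asymptotics_log (a L : ℝ) (ha : 0 < a)
    (f : ℝ → ℝ) (hf : ContinuousOn f (Set.Ioi 0)) (hf0 : ∀ t ∈ Set.Ioi (0 : ℝ), 0 ≤ f t)
    (hlim : Filter.Tendsto (fun t : ℝ => t * Real.log t ^ 2 * f t) Filter.atTop (nhds L)) :
    Filter.Tendsto
      (fun t : ℝ => t * Real.log t ^ 2 * Real.exp (a * t) *
        ∫ s in Set.Ioi t, Real.exp (-a * s) * f s)
      Filter.atTop (nhds (L / a)) := by
  exact tendsto_mul_exp_mul_setIntegral_Ioi ha isEquivalent_add_const_mul_log_sq (by simp)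
    monotoneOn_mul_log_sq ((hf.mono (Ioi_subset_Ioi zero_le_one)).aestronglyMeasurable
      measurableSet_Ioi) (fun s hs => hf0 s (zero_lt_one.trans_le hs)) hlim
end
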